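/- arXiv:1903.09440 — 2 statements merged into one kernel-verified Lean document; each statement's English description precedes it below -/
import Mathlib

section
/- Let A₁, ..., A_N be d×d real matrices that pairwise commute and satisfy ‖A_i^m‖ ≤ ρ < 1 for all i and some common m ≥ 1, and let ‖A_i‖ ≤ M for all i. Then there exist c > 0 and λ > 0 such that for every finite word w = (i₀, i₁, ..., i_{t−1}) over {1,...,N}, the matrix product P = A_{i_{t−1}} ⋯ A_{i₁} A_{i₀} satisfies ‖P‖ ≤ c·e^{−λt}. -/
open scoped Matrix.Norms.L2Operator

theorem stmt_7 (d N m : ℕ) (hm : 1 ≤ m) (A : Fin N → Matrix (Fin d) (Fin d) ℝ)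
    (M ρ : ℝ) (hρ : ρ < 1)
    (hcomm : ∀ i j, A i * A j = A j * A i)
    (hpow : ∀ i, ‖A i ^ m‖ ≤ ρ)
    (hbnd : ∀ i, ‖A i‖ ≤ M) :
    ∃ c > (0 : ℝ), ∃ lam > (0 : ℝ), ∀ t : ℕ, ∀ w : Fin t → Fin N,
      ‖(((List.ofFn fun k => A (w k))).reverse.prod)‖ ≤ c * Real.exp (-lam * t) := by
  classical
  set ρ' : ℝ := max ρ (1/2) with hρ'def
  have hρ'pos : (0:ℝ) < ρ' := lt_of_lt_of_le (by norm_num) (le_max_right _ _)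
  have hρ'lt : ρ' < 1 := max_lt hρ (by norm_num)
  have hlog : Real.log ρ' < 0 := Real.log_neg hρ'pos hρ'lt
  set M' : ℝ := max M 1 with hM'def
  have hM' : (1:ℝ) ≤ M' := le_max_right _ _
  have hM'pos : (0:ℝ) < M' := lt_of_lt_of_le one_pos hM'
  have hmR : (0:ℝ) < (m:ℝ) := by exact_mod_cast Nat.lt_of_lt_of_le Nat.zero_lt_one hm
  set C : ℝ := M' ^ m / ρ' with hCdef
  have hCpos : (0:ℝ) < C := by positivity
  have h1 : ‖(1 : Matrix (Fin d) (Fin d) ℝ)‖ ≤ 1 := by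
    rw [Matrix.cstar_norm_def, map_one]
    exact ContinuousLinearMap.norm_id_le
  have hAm : ∀ i, ‖A i ^ m‖ ≤ ρ' := fun i => (hpow i).trans (le_max_left _ _)
  have hA : ∀ i, ‖A i‖ ≤ M' := fun i => (hbnd i).trans (le_max_left _ _)
  have hxn : ∀ (x : Matrix (Fin d) (Fin d) ℝ) (b : ℝ) (n : ℕ), ‖x‖ ≤ b → ‖x ^ n‖ ≤ b ^ n := by
    intro x b n hx
    cases n with
    | zero => simpa using h1
    | succ n => exact (norm_pow_le' x n.succ_pos).trans (pow_le_pow_left₀ (norm_nonneg x) hx _)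
  -- key per-letter bound
  have key : ∀ (i : Fin N) (n : ℕ), ‖A i ^ n‖ ≤ C * Real.exp (Real.log ρ' * n / m) := by
    intro i n
    have hn : m * (n / m) + n % m = n := Nat.div_add_mod n m
    have hr : n % m < m := Nat.mod_lt _ (by omega)
    set q := n / m
    set r := n % m
    have e1 : A i ^ n = (A i ^ m) ^ q * A i ^ r := by rw [← pow_mul, ← pow_add, hn]
    have b1 : ‖(A i ^ m) ^ q‖ ≤ ρ' ^ q := hxn _ _ _ (hAm i)
    have b2 : ‖A i ^ r‖ ≤ M' ^ m := (hxn _ _ _ (hA i)).trans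
      (pow_le_pow_right₀ hM' hr.le)
    have e2 : (ρ':ℝ) ^ q = Real.exp ((q:ℝ) * Real.log ρ') := by
      rw [Real.exp_nat_mul, Real.exp_log hρ'pos]
    have hq : Real.log ρ' * (q:ℝ) ≤ Real.log ρ' * ((n:ℝ)/m - 1) := by
      apply mul_le_mul_of_nonpos_left _ hlog.le
      rw [sub_le_iff_le_add, div_le_iff₀ hmR]
      have : (n:ℝ) ≤ (m:ℝ) * (q:ℝ) + (m:ℝ) := by
        exact_mod_cast (by omega : n ≤ m * q + m)
      linarith
    calc ‖A i ^ n‖ ≤ ‖(A i ^ m) ^ q‖ * ‖A i ^ r‖ := e1 ▸ norm_mul_le _ _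
      _ ≤ ρ' ^ q * M' ^ m := by
          apply mul_le_mul b1 b2 (norm_nonneg _) (by positivity)
      _ ≤ Real.exp (Real.log ρ' * ((n:ℝ)/m - 1)) * M' ^ m := by
          rw [e2]
          apply mul_le_mul_of_nonneg_right _ (by positivity)
          exact Real.exp_le_exp.2 (by rw [mul_comm]; exact hq)
      _ = C * Real.exp (Real.log ρ' * n / m) := by
          rw [mul_sub, mul_one, Real.exp_sub, Real.exp_log hρ'pos, hCdef,
            mul_div_assoc]
          ring
  refine ⟨C ^ N, by positivity, -Real.log ρ' / m, div_pos (neg_pos.2 hlog) hmR, ?_⟩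
  intro t w
  set l : List (Fin N) := (List.ofFn w).reverse with hldef
  have hmat : ((List.ofFn fun k => A (w k))).reverse = l.map A := by
    simp [hldef, List.map_reverse, List.map_ofFn, Function.comp_def]
  set c : Fin N → ℕ := fun i => l.count i with hcdef
  set l' : List (Fin N) := (List.finRange N).flatMap (fun i => List.replicate (c i) i)
    with hl'def
  have hperm : l.Perm l' := by
    rw [List.perm_iff_count]
    intro a
    rw [hl'def, List.count_flatMap, ← Fin.sum_univ_def]
    simp [hcdef, Function.comp_def, List.count_replicate]
  have hpairwise : (l.map A).Pairwise Commute := by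
    apply List.pairwise_of_forall_mem_list
    intro x hx y hy
    obtain ⟨i, _, rfl⟩ := List.mem_map.1 hx
    obtain ⟨j, _, rfl⟩ := List.mem_map.1 hy
    exact hcomm i j
  have hprod : (l.map A).prod = ((List.finRange N).map (fun i => A i ^ c i)).prod := by
    rw [(hperm.map A).prod_eq' hpairwise, hl'def, List.map_flatMap,
      List.flatMap_def, List.prod_flatten, List.map_map]
    simp [Function.comp_def, List.map_replicate, List.prod_replicate]
  have haux : ∀ (L : List (Fin N)),
      ‖(L.map (fun i => A i ^ c i)).prod‖
        ≤ (L.map (fun i => C * Real.exp (Real.log ρ' * c i / m))).prod := by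
    intro L
    induction L with
    | nil => simpa using h1
    | cons a L ih =>
      simp only [List.map_cons, List.prod_cons]
      refine (norm_mul_le _ _).trans ?_
      refine mul_le_mul (key a (c a)) ih (norm_nonneg _) (by positivity)
  have hsum : (∑ i : Fin N, c i) = t := by
    have h2 := hperm.length_eq
    have hlt : l.length = t := by simp [hldef]
    rw [hl'def, List.length_flatMap] at h2
    rw [← hlt, h2, ← Fin.sum_univ_def]
    simp [Function.comp_def]
  have hfin : ((List.finRange N).map
      (fun i => C * Real.exp (Real.log ρ' * c i / m))).prod
        = C ^ N * Real.exp (-(- Real.log ρ' / m) * t) := by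
    rw [← Fin.prod_univ_def, Finset.prod_mul_distrib, Finset.prod_const,
      Finset.card_univ, Fintype.card_fin, ← Real.exp_sum]
    congr 1
    have : ∑ i : Fin N, Real.log ρ' * (c i : ℝ) / m
        = Real.log ρ' * (∑ i : Fin N, (c i : ℝ)) / m := by
      rw [Finset.mul_sum, Finset.sum_div]
    rw [this]
    have hcast : (∑ i : Fin N, (c i : ℝ)) = (t : ℝ) := by
      exact_mod_cast congrArg (Nat.cast : ℕ → ℝ) hsum
    rw [hcast]
    ring
  calc ‖((List.ofFn fun k => A (w k))).reverse.prod‖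
      = ‖(l.map A).prod‖ := by rw [hmat]
    _ = ‖((List.finRange N).map (fun i => A i ^ c i)).prod‖ := by rw [hprod]
    _ ≤ ((List.finRange N).map (fun i => C * Real.exp (Real.log ρ' * c i / m))).prod :=
        haux _
    _ = C ^ N * Real.exp (-(- Real.log ρ' / m) * t) := hfin
end

section
/- Let A₁, ..., A_N be d×d real matrices with ‖A_i‖ ≤ M and ‖A_i A_j − A_j A_i‖ ≤ ε for all i, j, and suppose ‖A_i^m‖ ≤ ρ < 1 for all i with some m ≥ 1. Suppose there exists λ > 0 such that ρ·e^{λm} + m(N−1)(m−1)·ε·M^{N(m−1)−1}·e^{λ(N(m−1)+1)} ≤ 1. Then there exists c > 0 such that for every finite word w of length t ≥ 1 over {1,...,N}, the corresponding product P_w = A_{w(t−1)} ⋯ A_{w(0)} satisfies ‖P_w‖ ≤ c·e^{−λt}. In particular, the switched system x(t+1) = A_{σ(t)}x(t) is globally uniformly exponentially stable under arbitrary switching. -/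
open scoped Matrix.Norms.L2Operator

section Aux

variable {R : Type*} [NormedRing R]

lemma auxA (hone : ‖(1:R)‖ ≤ 1) {M' : ℝ} (hM0 : 0 ≤ M') :
    ∀ l : List R, (∀ x ∈ l, ‖x‖ ≤ M') → ‖l.prod‖ ≤ M' ^ l.length := by
  intro l
  induction l with
  | nil => intro _; simpa using hone
  | cons x l ih =>
    intro h
    simp only [List.prod_cons, List.length_cons]
    calc ‖x * l.prod‖ ≤ ‖x‖ * ‖l.prod‖ := norm_mul_le _ _
      _ ≤ M' * M' ^ l.length := by
          apply mul_le_mul (h x (by simp)) (ih fun y hy => h y (by simp [hy]))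
            (norm_nonneg _) hM0
      _ = M' ^ (l.length + 1) := by ring

lemma auxC {M eps : ℝ} (S : Set R) (hone : ‖(1:R)‖ ≤ 1) (hM0 : 0 ≤ M) (heps : 0 ≤ eps)
    (hMS : ∀ x ∈ S, ‖x‖ ≤ M) (hcS : ∀ x ∈ S, ∀ y ∈ S, ‖x*y - y*x‖ ≤ eps) :
    ∀ (xs ys : List R) (a : R), a ∈ S → (∀ x ∈ xs, x ∈ S) → (∀ x ∈ ys, x ∈ S) →
      ‖(xs ++ a :: ys).prod - a * (xs ++ ys).prod‖ ≤
        xs.length * eps * M ^ (xs.length + ys.length - 1) := by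
  intro xs
  induction xs with
  | nil => intro ys a _ _ _; simp
  | cons p xs ih =>
    intro ys a haS hxs hys
    have hpS : p ∈ S := hxs p (by simp)
    have hxs' : ∀ x ∈ xs, x ∈ S := fun x hx => hxs x (by simp [hx])
    have hZ : ‖(xs ++ ys).prod‖ ≤ M ^ (xs.length + ys.length) := by
      have := auxA hone hM0 (xs ++ ys) (fun z hz => by
        rcases List.mem_append.mp hz with h | h
        · exact hMS z (hxs' z h)
        · exact hMS z (hys z h))
      simpa using this
    have key1 := ih ys a haS hxs' hys
    have h1 : ‖(p :: xs ++ a :: ys).prod - p * (a * (xs ++ ys).prod)‖ ≤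
        xs.length * eps * M ^ (xs.length + ys.length) := by
      have e : (p :: xs ++ a :: ys).prod - p * (a * (xs ++ ys).prod)
          = p * ((xs ++ a :: ys).prod - a * (xs ++ ys).prod) := by
        simp only [List.cons_append, List.prod_cons]; noncomm_ring
      rw [e]
      calc ‖p * ((xs ++ a :: ys).prod - a * (xs ++ ys).prod)‖
          ≤ ‖p‖ * ‖(xs ++ a :: ys).prod - a * (xs ++ ys).prod‖ := norm_mul_le _ _
        _ ≤ M * (xs.length * eps * M ^ (xs.length + ys.length - 1)) := by
            apply mul_le_mul (hMS p hpS) key1 (norm_nonneg _) hM0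
        _ ≤ xs.length * eps * M ^ (xs.length + ys.length) := by
            rcases Nat.eq_zero_or_pos xs.length with h | h
            · simp [h]
            · have he : xs.length + ys.length - 1 + 1 = xs.length + ys.length := by omega
              have hMM : M * M ^ (xs.length + ys.length - 1) = M ^ (xs.length + ys.length) := by
                rw [← pow_succ', he]
              exact le_of_eq (by rw [← hMM]; ring)
    have h2 : ‖p * (a * (xs ++ ys).prod) - a * ((p :: xs) ++ ys).prod‖ ≤
        eps * M ^ (xs.length + ys.length) := by
      have e : p * (a * (xs ++ ys).prod) - a * ((p :: xs) ++ ys).prod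
          = (p*a - a*p) * (xs ++ ys).prod := by
        simp only [List.cons_append, List.prod_cons]; noncomm_ring
      rw [e]
      calc ‖(p*a - a*p) * (xs ++ ys).prod‖
          ≤ ‖p*a - a*p‖ * ‖(xs ++ ys).prod‖ := norm_mul_le _ _
        _ ≤ eps * M ^ (xs.length + ys.length) := by
            apply mul_le_mul (hcS p hpS a haS) hZ (norm_nonneg _) heps
    calc ‖(p :: xs ++ a :: ys).prod - a * ((p :: xs) ++ ys).prod‖
        ≤ ‖(p :: xs ++ a :: ys).prod - p * (a * (xs ++ ys).prod)‖ +
          ‖p * (a * (xs ++ ys).prod) - a * ((p :: xs) ++ ys).prod‖ :=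
          norm_sub_le_norm_sub_add_norm_sub _ _ _
      _ ≤ xs.length * eps * M ^ (xs.length + ys.length) +
          eps * M ^ (xs.length + ys.length) := add_le_add h1 h2
      _ = (p :: xs).length * eps * M ^ ((p :: xs).length + ys.length - 1) := by
          have he : (p :: xs).length + ys.length - 1 = xs.length + ys.length := by
            simp only [List.length_cons]; omega
          rw [he]
          push_cast [List.length_cons]
          ring

lemma auxFirst {a : R} : ∀ l : List R, a ∈ l → ∃ xs ys, l = xs ++ a :: ys ∧ a ∉ xs := by
  intro l
  induction l with
  | nil => intro h; simp at h
  | cons x l ih =>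
    intro h
    by_cases hx : x = a
    · subst hx; exact ⟨[], l, rfl, by simp⟩
    · have hal : a ∈ l := by
        rcases List.mem_cons.mp h with h' | h'
        · exact absurd h'.symm hx
        · exact h'
      rcases ih hal with ⟨xs, ys, h1, h2⟩
      refine ⟨x :: xs, ys, by simp [h1], ?_⟩
      simp only [List.mem_cons, not_or]
      exact ⟨fun hh => hx hh.symm, h2⟩

lemma auxD [DecidableEq R] {M eps : ℝ} (S : Set R) (hone : ‖(1:R)‖ ≤ 1) (hM0 : 0 ≤ M)
    (heps : 0 ≤ eps)
    (hMS : ∀ x ∈ S, ‖x‖ ≤ M) (hcS : ∀ x ∈ S, ∀ y ∈ S, ‖x*y - y*x‖ ≤ eps) (a : R) (haS : a ∈ S) :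
    ∀ (k : ℕ) (l : List R), (∀ x ∈ l, x ∈ S) → k ≤ l.count a →
      ∃ r : List R, (∀ x ∈ r, x ∈ S) ∧ r.length + k = l.length ∧
        ‖l.prod - a^k * r.prod‖ ≤ (k * (l.length - k) : ℕ) * eps * M ^ (l.length - 2) := by
  intro k
  induction k with
  | zero => intro l hl _; exact ⟨l, hl, by simp, by simp⟩
  | succ k ih =>
    intro l hl hcount
    have hal : a ∈ l := List.count_pos_iff.mp (by omega)
    rcases auxFirst l hal with ⟨xs, ys, rfl, hnxs⟩
    have hxsS : ∀ x ∈ xs, x ∈ S := fun x hx => hl x (by simp [hx])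
    have hysS : ∀ x ∈ ys, x ∈ S := fun x hx => hl x (by simp [hx])
    have hcxs : xs.count a = 0 := List.count_eq_zero.mpr hnxs
    have hcys : k ≤ ys.count a := by
      simp only [List.count_append, List.count_cons_self, hcxs] at hcount
      omega
    have hcount' : k ≤ (xs ++ ys).count a := by
      simp only [List.count_append, hcxs]; omega
    have hysk : k ≤ ys.length := le_trans hcys List.count_le_length
    rcases ih (xs ++ ys) (fun x hx => by
        rcases List.mem_append.mp hx with h | h
        · exact hxsS x h
        · exact hysS x h) hcount' with ⟨r, hrS, hrlen, hr⟩
    have hL : (xs ++ a :: ys).length = xs.length + ys.length + 1 := by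
      simp only [List.length_append, List.length_cons]; omega
    have hL' : (xs ++ ys).length = xs.length + ys.length := by simp
    refine ⟨r, hrS, by omega, ?_⟩
    have hdecomp : (xs ++ a :: ys).prod - a^(k+1) * r.prod
        = ((xs ++ a :: ys).prod - a * (xs ++ ys).prod)
          + a * ((xs ++ ys).prod - a^k * r.prod) := by
      rw [pow_succ']; noncomm_ring
    rw [hdecomp]
    have hterm1 : ‖(xs ++ a :: ys).prod - a * (xs ++ ys).prod‖ ≤
        ((xs.length + ys.length - k) : ℕ) * eps * M ^ ((xs ++ a :: ys).length - 2) := by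
      refine le_trans (auxC S hone hM0 heps hMS hcS xs ys a haS hxsS hysS) ?_
      have he : (xs ++ a :: ys).length - 2 = xs.length + ys.length - 1 := by omega
      rw [he]
      have hle : xs.length ≤ xs.length + ys.length - k := by omega
      apply mul_le_mul_of_nonneg_right
        (mul_le_mul_of_nonneg_right (Nat.cast_le.mpr hle) heps) (by positivity)
    have hterm2 : ‖a * ((xs ++ ys).prod - a^k * r.prod)‖ ≤
        ((k * (xs.length + ys.length - k)) : ℕ) * eps * M ^ ((xs ++ a :: ys).length - 2) := by
      rw [hL'] at hr
      calc ‖a * ((xs ++ ys).prod - a^k * r.prod)‖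
          ≤ ‖a‖ * ‖(xs ++ ys).prod - a^k * r.prod‖ := norm_mul_le _ _
        _ ≤ M * (((k * (xs.length + ys.length - k)) : ℕ) * eps *
              M ^ (xs.length + ys.length - 2)) := by
            apply mul_le_mul (hMS a haS) hr (norm_nonneg _) hM0
        _ ≤ ((k * (xs.length + ys.length - k)) : ℕ) * eps *
              M ^ ((xs ++ a :: ys).length - 2) := by
            rcases Nat.eq_zero_or_pos (k * (xs.length + ys.length - k)) with h0 | h0
            · simp [h0]
            · have hk1 : 1 ≤ k := by
                rcases Nat.eq_zero_or_pos k with h | h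
                · simp [h] at h0
                · exact h
              have hf2 : 1 ≤ xs.length + ys.length - k := by
                rcases Nat.eq_zero_or_pos (xs.length + ys.length - k) with h | h
                · simp [h] at h0
                · exact h
              have hlen2 : 2 ≤ xs.length + ys.length := by omega
              have he : (xs ++ a :: ys).length - 2 = (xs.length + ys.length - 2) + 1 := by
                omega
              have hMM : M * M ^ (xs.length + ys.length - 2) =
                  M ^ ((xs ++ a :: ys).length - 2) := by
                rw [he, pow_succ]; ring
              exact le_of_eq (by rw [← hMM]; ring)
    calc ‖((xs ++ a :: ys).prod - a * (xs ++ ys).prod)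
          + a * ((xs ++ ys).prod - a^k * r.prod)‖
        ≤ ‖(xs ++ a :: ys).prod - a * (xs ++ ys).prod‖ +
          ‖a * ((xs ++ ys).prod - a^k * r.prod)‖ := norm_add_le _ _
      _ ≤ ((xs.length + ys.length - k) : ℕ) * eps * M ^ ((xs ++ a :: ys).length - 2) +
          ((k * (xs.length + ys.length - k)) : ℕ) * eps *
            M ^ ((xs ++ a :: ys).length - 2) := add_le_add hterm1 hterm2
      _ = (((k+1) * ((xs ++ a :: ys).length - (k+1))) : ℕ) * eps *
            M ^ ((xs ++ a :: ys).length - 2) := by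
          have hn : (k+1) * ((xs ++ a :: ys).length - (k+1))
              = (xs.length + ys.length - k) + k * (xs.length + ys.length - k) := by
            have : (xs ++ a :: ys).length - (k+1) = xs.length + ys.length - k := by omega
            rw [this]; ring
          rw [hn]
          push_cast
          ring

lemma auxPigeon {n : ℕ} (m' : ℕ) (u : List (Fin n)) (h : n * m' < u.length) :
    ∃ i, m' + 1 ≤ u.count i := by
  by_contra hc
  push_neg at hc
  have hsum : (∑ a ∈ u.toFinset, u.count a) = u.length := by
    have := Multiset.toFinset_sum_count_eq (u : Multiset (Fin n))
    simpa using this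
  have hle : (∑ a ∈ u.toFinset, u.count a) ≤ ∑ _a ∈ u.toFinset, m' :=
    Finset.sum_le_sum (fun a _ => by have := hc a; omega)
  have hcard : u.toFinset.card ≤ n := le_trans (Finset.card_le_univ _) (by simp)
  rw [Finset.sum_const, smul_eq_mul] at hle
  have h2 : u.toFinset.card * m' ≤ n * m' := Nat.mul_le_mul_right m' hcard
  omega

lemma auxCountMap {N : ℕ} {R : Type*} [DecidableEq R] (A : Fin N → R) (i : Fin N) :
    ∀ u : List (Fin N), u.count i ≤ (u.map A).count (A i) := by
  intro u
  induction u with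
  | nil => simp
  | cons j u ih =>
    simp only [List.map_cons, List.count_cons, beq_iff_eq]
    split_ifs with h1 h2
    · omega
    · exact absurd (congrArg A h1) h2
    · omega
    · exact ih

lemma auxWord {N : ℕ} {R : Type*} (A : Fin N → R) :
    ∀ l : List R, (∀ x ∈ l, ∃ i, x = A i) → ∃ u : List (Fin N), l = u.map A := by
  intro l
  induction l with
  | nil => intro _; exact ⟨[], rfl⟩
  | cons x l ih =>
    intro h
    obtain ⟨i, hi⟩ := h x (by simp)
    obtain ⟨u, hu⟩ := ih (fun y hy => h y (by simp [hy]))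
    exact ⟨i :: u, by simp [hi, hu]⟩

end Aux

lemma matrix_one_norm_le (d : ℕ) : ‖(1 : Matrix (Fin d) (Fin d) ℝ)‖ ≤ 1 := by
  rw [Matrix.cstar_norm_def, map_one]
  exact ContinuousLinearMap.norm_id_le

theorem stmt_13 (d N m : ℕ) (hm : 1 ≤ m) (A : Fin N → Matrix (Fin d) (Fin d) ℝ)
    (M ε ρ : ℝ) (hρ : ρ < 1)
    (hbnd : ∀ i, ‖A i‖ ≤ M)
    (hcomm : ∀ i j, ‖A i * A j - A j * A i‖ ≤ ε)
    (hpow : ∀ i, ‖A i ^ m‖ ≤ ρ)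
    (lam : ℝ) (hlam : 0 < lam)
    (hkey : ρ * Real.exp (lam * m) +
        (m * (N - 1) * (m - 1) : ℕ) * ε * M ^ (N * (m - 1) - 1) *
          Real.exp (lam * (N * (m - 1) + 1 : ℕ)) ≤ 1) :
    ∃ c > (0 : ℝ), ∀ t : ℕ, 1 ≤ t → ∀ w : Fin t → Fin N,
      ‖((List.ofFn fun k => A (w k)).reverse.prod)‖ ≤ c * Real.exp (-lam * t) := by
  classical
  have hone : ‖(1 : Matrix (Fin d) (Fin d) ℝ)‖ ≤ 1 := matrix_one_norm_le d
  set L : ℕ := N * (m - 1) + 1 with hLdef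
  set M' : ℝ := max 1 M with hM'def
  set C : ℝ := M' ^ L * Real.exp (lam * L) with hCdef
  have hM'1 : (1:ℝ) ≤ M' := le_max_left _ _
  have hM'0 : (0:ℝ) ≤ M' := le_trans zero_le_one hM'1
  have hCpos : 0 < C := by
    apply mul_pos (pow_pos (lt_of_lt_of_le zero_lt_one hM'1) _) (Real.exp_pos _)
  have hS : ∀ x ∈ Set.range A, ‖x‖ ≤ M := by
    rintro x ⟨i, rfl⟩; exact hbnd i
  have hcSr : ∀ x ∈ Set.range A, ∀ y ∈ Set.range A, ‖x*y - y*x‖ ≤ ε := by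
    rintro x ⟨i, rfl⟩ y ⟨j, rfl⟩; exact hcomm i j
  have main : ∀ t : ℕ, ∀ l : List (Matrix (Fin d) (Fin d) ℝ), l.length = t → (∀ x ∈ l, ∃ i, x = A i) →
      ‖l.prod‖ ≤ C * Real.exp (-lam * t) := by
    intro t
    induction t using Nat.strong_induction_on with
    | _ t ih =>
      intro l hlen hmem
      by_cases ht : t < L
      · -- short words
        have hb : ‖l.prod‖ ≤ M' ^ t := by
          rw [← hlen]
          apply auxA hone hM'0 l
          intro x hx
          obtain ⟨i, rfl⟩ := hmem x hx
          exact le_trans (hbnd i) (le_max_right _ _)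
        calc ‖l.prod‖ ≤ M' ^ t := hb
          _ ≤ M' ^ L := pow_le_pow_right₀ hM'1 (le_of_lt ht)
          _ = M' ^ L * 1 := (mul_one _).symm
          _ ≤ M' ^ L * (Real.exp (lam * L) * Real.exp (-lam * t)) := by
              apply mul_le_mul_of_nonneg_left ?_ (by positivity)
              rw [← Real.exp_add]
              apply Real.one_le_exp
              have hcast : (t:ℝ) ≤ (L:ℝ) := Nat.cast_le.mpr (le_of_lt ht)
              nlinarith [hlam.le]
          _ = C * Real.exp (-lam * t) := by rw [hCdef]; ring
      · -- long words
        push_neg at ht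
        have htL : L ≤ t := ht
        have hlpos : 0 < l.length := by omega
        obtain ⟨x0, hx0⟩ := List.exists_mem_of_length_pos hlpos
        obtain ⟨i0, _⟩ := hmem x0 hx0
        have hNpos : 0 < N := i0.pos
        have hM0 : 0 ≤ M := le_trans (norm_nonneg _) (hbnd i0)
        have heps0 : 0 ≤ ε := le_trans (norm_nonneg _) (hcomm i0 i0)
        have hrho0 : 0 ≤ ρ := le_trans (norm_nonneg _) (hpow i0)
        have hmm : m - 1 ≤ N * (m - 1) := Nat.le_mul_of_pos_left (m-1) hNpos
        have hmL : m ≤ L := by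
          rw [hLdef]
          have h := hmm
          generalize N * (m - 1) = q at h ⊢
          omega
        set hd := l.take L with hhd
        set tl := l.drop L with htl
        have hsplit : hd ++ tl = l := List.take_append_drop _ _
        have hdlen : hd.length = L := by rw [hhd, List.length_take]; omega
        have tllen : tl.length = t - L := by rw [htl, List.length_drop]; omega
        have hdmem : ∀ x ∈ hd, ∃ i, x = A i := fun x hx =>
          hmem x (by rw [← hsplit]; exact List.mem_append.mpr (Or.inl hx))
        have tlmem : ∀ x ∈ tl, ∃ i, x = A i := fun x hx =>
          hmem x (by rw [← hsplit]; exact List.mem_append.mpr (Or.inr hx))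
        obtain ⟨u, hu⟩ := auxWord A hd hdmem
        have hulen : u.length = L := by
          have := hdlen; rw [hu, List.length_map] at this; exact this
        obtain ⟨i, hi⟩ := auxPigeon (m-1) u (by rw [hulen, hLdef]; exact Nat.lt_succ_self _)
        have hcnt : m ≤ hd.count (A i) := by
          have h1 : m ≤ u.count i := by omega
          exact le_trans h1 (by rw [hu]; exact auxCountMap A i u)
        obtain ⟨r, hrS, hrlen, herr⟩ := auxD (Set.range A) hone hM0 heps0 hS hcSr (A i)
          ⟨i, rfl⟩ m hd (fun x hx => by
            obtain ⟨j, hj⟩ := hdmem x hx; exact ⟨j, hj.symm⟩) hcnt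
        rw [hdlen] at hrlen herr
        have hrtlen : (r ++ tl).length = t - m := by
          rw [List.length_append, tllen]; omega
        have h1 : ‖(r ++ tl).prod‖ ≤ C * Real.exp (-lam * ((t - m : ℕ) : ℝ)) := by
          apply ih (t - m) (by omega) _ hrtlen
          intro x hx
          rcases List.mem_append.mp hx with h | h
          · obtain ⟨j, hj⟩ := hrS x h; exact ⟨j, hj.symm⟩
          · exact tlmem x h
        have h2 : ‖tl.prod‖ ≤ C * Real.exp (-lam * ((t - L : ℕ) : ℝ)) :=
          ih (t - L) (by omega) _ tllen tlmem
        have hdec : l.prod = (A i)^m * ((r ++ tl).prod) +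
            (hd.prod - (A i)^m * r.prod) * tl.prod := by
          rw [← hsplit, List.prod_append, List.prod_append]
          noncomm_ring
        have hbound : ‖l.prod‖ ≤ ρ * (C * Real.exp (-lam * ((t - m : ℕ) : ℝ))) +
            ((m * (L - m) : ℕ) * ε * M ^ (L - 2)) *
              (C * Real.exp (-lam * ((t - L : ℕ) : ℝ))) := by
          rw [hdec]
          calc ‖(A i)^m * ((r ++ tl).prod) + (hd.prod - (A i)^m * r.prod) * tl.prod‖
              ≤ ‖(A i)^m * ((r ++ tl).prod)‖ + ‖(hd.prod - (A i)^m * r.prod) * tl.prod‖ :=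
                norm_add_le _ _
            _ ≤ ‖(A i)^m‖ * ‖(r ++ tl).prod‖ +
                ‖hd.prod - (A i)^m * r.prod‖ * ‖tl.prod‖ :=
                add_le_add (norm_mul_le _ _) (norm_mul_le _ _)
            _ ≤ ρ * (C * Real.exp (-lam * ((t - m : ℕ) : ℝ))) +
                ((m * (L - m) : ℕ) * ε * M ^ (L - 2)) *
                  (C * Real.exp (-lam * ((t - L : ℕ) : ℝ))) := by
                apply add_le_add
                · exact mul_le_mul (hpow i) h1 (norm_nonneg _) hrho0
                · exact mul_le_mul herr h2 (norm_nonneg _) (by positivity)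
        -- now the key arithmetic
        have hcast1 : ((t - m : ℕ) : ℝ) = (t:ℝ) - m := by
          rw [Nat.cast_sub (le_trans hmL htL)]
        have hcast2 : ((t - L : ℕ) : ℝ) = (t:ℝ) - L := by
          rw [Nat.cast_sub htL]
        have hK : (m * (L - m) : ℕ) = m * (N - 1) * (m - 1) := by
          rw [hLdef]
          have hq : N * (m-1) + 1 - m = (N-1) * (m-1) := by
            obtain ⟨m', rfl⟩ : ∃ m', m = m' + 1 := ⟨m - 1, by omega⟩
            obtain ⟨N', rfl⟩ : ∃ N', N = N' + 1 := ⟨N - 1, by omega⟩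
            simp only [Nat.add_sub_cancel]
            rw [Nat.add_mul, one_mul]
            generalize N' * m' = q
            omega
          rw [hq]; ring
        have hE : L - 2 = N * (m - 1) - 1 := by
          rw [hLdef]
          generalize N * (m - 1) = q
          omega
        calc ‖l.prod‖ ≤ ρ * (C * Real.exp (-lam * ((t - m : ℕ) : ℝ))) +
            ((m * (L - m) : ℕ) * ε * M ^ (L - 2)) *
              (C * Real.exp (-lam * ((t - L : ℕ) : ℝ))) := hbound
          _ = (C * Real.exp (-lam * t)) *
              (ρ * Real.exp (lam * m) +
                (m * (N - 1) * (m - 1) : ℕ) * ε * M ^ (N * (m - 1) - 1) *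
                  Real.exp (lam * (N * (m - 1) + 1 : ℕ))) := by
              rw [hcast1, hcast2, hK, hE]
              have e1 : Real.exp (-lam * ((t:ℝ) - m)) =
                  Real.exp (-lam * t) * Real.exp (lam * m) := by
                rw [← Real.exp_add]; ring_nf
              have e2 : Real.exp (-lam * ((t:ℝ) - L)) =
                  Real.exp (-lam * t) * Real.exp (lam * L) := by
                rw [← Real.exp_add]; ring_nf
              rw [e1, e2, hLdef]
              push_cast
              ring
          _ ≤ (C * Real.exp (-lam * t)) * 1 := by
              apply mul_le_mul_of_nonneg_left hkey (by positivity)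
          _ = C * Real.exp (-lam * t) := mul_one _
  refine ⟨C, hCpos, ?_⟩
  intro t _ w
  apply main t
  · simp
  · intro x hx
    rw [List.mem_reverse, List.mem_ofFn] at hx
    obtain ⟨k, hk⟩ := hx
    exact ⟨w k, hk.symm⟩
end
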